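/- Let J ≥ 3 be an integer and let A be a real number with 0 < A ≤ 1. For each ℓ ∈ ℕ let B^{(ℓ)} : ℤ × {0,…,J−1} → ℝ satisfy 0 ≤ B^{(ℓ)}(t,k) ≤ 1 for all t,k, and suppose that for every ℓ ≥ 1, every t ∈ ℤ, and every k ∈ {0,…,J−1}, B^{(ℓ)}(t,k) ≤ A · ∏_{k' ∈ {0,…,J−1}, k' ≠ k} ( B^{(ℓ−1)}(t,k') + Σ_{i' ∈ {0,…,J−1}, i' ≠ k'} B^{(ℓ−1)}(t+k'−i', i')² ). Define B_max^{(ℓ)} = sup_{t,k} B^{(ℓ)}(t,k) and the breakout value B_br = A^{−1/(J−1)} · (2J−1)^{−(J−1)/(J−2)}. If B_max^{(ℓ')} < B_br for some iteration ℓ', then for every ℓ₀ ≥ ℓ' and all t ∈ ℤ, k ∈ {0,…,J−1}, B^{(ℓ₀)}(t,k) ≤ B_max^{(ℓ₀)} ≤ B_br · ( B_max^{(ℓ')} / B_br )^{(J−1)^{ℓ₀−ℓ'}}, so the Bhattacharyya parameters of all messages—and hence the bit error probabilities of all code symbols—converge to zero at least double exponentially with the number of decoding iterations. -/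

import Mathlib

/-!
Each message bound is a product of `J - 1` factors, and each factor is at most
`J m ≤ (2J - 1) m`, where `m ≤ 1` is the previous maximum (one term `≤ m` and `J - 1` squares
`≤ m² ≤ m`). Hence the maxima obey `x (ℓ + 1) ≤ A ((2J - 1) x ℓ) ^ (J - 1)`. The breakout
value `β` is chosen so that `A ((2J - 1) β) ^ (J - 1) ≤ β`, and then the ratio `x ℓ / β` is
at least raised to the power `J - 1` at every iteration.
-/

open Finset

noncomputable def breakout (A C : ℝ) (J : ℕ) : ℝ :=
  A ^ (-(1 : ℝ) / ((J : ℝ) - 1)) * C ^ (-((J : ℝ) - 1) / ((J : ℝ) - 2))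

lemma mul_mul_breakout_pow_eq {A C : ℝ} {J : ℕ} (hJ : 3 ≤ J) (hA : 0 < A) (hC : 0 < C) :
    A * (C * breakout A C J) ^ (J - 1) = C ^ (-((J : ℝ) - 1) / ((J : ℝ) - 2)) := by
  have hJR : (3 : ℝ) ≤ J := by exact_mod_cast hJ
  have hd : ((J - 1 : ℕ) : ℝ) = (J : ℝ) - 1 := by push_cast [show 1 ≤ J by omega]; ring
  rw [breakout, ← Real.rpow_natCast, hd, Real.mul_rpow hC.le (by positivity),
    Real.mul_rpow (by positivity) (by positivity), ← Real.rpow_mul hA.le,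
    ← Real.rpow_mul hC.le]
  have hAexp : -(1 : ℝ) / ((J : ℝ) - 1) * ((J : ℝ) - 1) = -1 := by
    field_simp [show (J : ℝ) - 1 ≠ 0 by linarith]
  have hCexp : ((J : ℝ) - 1) + -((J : ℝ) - 1) / ((J : ℝ) - 2) * ((J : ℝ) - 1) =
      -((J : ℝ) - 1) / ((J : ℝ) - 2) := by
    field_simp [show (J : ℝ) - 2 ≠ 0 by linarith]
    ring
  conv_rhs => rw [← hCexp]
  rw [hAexp, Real.rpow_neg_one, Real.rpow_add hC]
  field_simp

lemma mul_mul_breakout_pow_le {A C : ℝ} {J : ℕ} (hJ : 3 ≤ J) (hA0 : 0 < A) (hA1 : A ≤ 1)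
    (hC : 0 < C) : A * (C * breakout A C J) ^ (J - 1) ≤ breakout A C J := by
  have hJR : (3 : ℝ) ≤ J := by exact_mod_cast hJ
  rw [mul_mul_breakout_pow_eq hJ hA0 hC, breakout]
  refine le_mul_of_one_le_left (by positivity) ?_
  exact Real.one_le_rpow_of_pos_of_le_one_of_nonpos hA0 hA1
    (div_nonpos_of_nonpos_of_nonneg (by norm_num) (by linarith))

lemma le_mul_div_pow_pow_of_le_mul_mul_pow {x : ℕ → ℝ} {A C β : ℝ} {d m : ℕ}
    (hx : ∀ n, 0 ≤ x n) (hA : 0 ≤ A) (hC : 0 ≤ C) (hβ : 0 < β)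
    (hβfix : A * (C * β) ^ d ≤ β) (hstep : ∀ n, x (n + 1) ≤ A * (C * x n) ^ d) :
    ∀ n, m ≤ n → x n ≤ β * (x m / β) ^ (d ^ (n - m)) := by
  have hr : 0 ≤ x m / β := div_nonneg (hx m) hβ.le
  refine Nat.le_induction (by simp [mul_div_cancel₀ _ hβ.ne']) fun n hmn ih => ?_
  calc x (n + 1) ≤ A * (C * x n) ^ d := hstep n
    _ ≤ A * (C * (β * (x m / β) ^ (d ^ (n - m)))) ^ d := by gcongr; exact mul_nonneg hC (hx n)
    _ = A * (C * β) ^ d * (x m / β) ^ (d ^ (n + 1 - m)) := by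
      rw [Nat.sub_add_comm hmn, pow_succ, pow_mul]; ring
    _ ≤ β * (x m / β) ^ (d ^ (n + 1 - m)) := by gcongr

lemma le_ciSup₂_of_forall_le {ι κ : Type*} {f : ι → κ → ℝ} {c : ℝ} (hf : ∀ i k, f i k ≤ c)
    (i : ι) (k : κ) : f i k ≤ ⨆ (i) (k), f i k :=
  le_ciSup₂ ⟨c, by rintro _ ⟨_, ⟨i, rfl⟩, ⟨k, rfl⟩⟩; exact hf i k⟩ i k

section DensityEvolution

variable {J : ℕ}

def densityFactor (b : ℤ → Fin J → ℝ) (t : ℤ) (k' : Fin J) : ℝ :=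
  b t k' + ∑ i' ∈ univ.erase k', (b (t + ((k' : ℕ) : ℤ) - ((i' : ℕ) : ℤ)) i') ^ 2

lemma densityFactor_le {b : ℤ → Fin J → ℝ} {m : ℝ} (hb0 : ∀ t k, 0 ≤ b t k)
    (hbm : ∀ t k, b t k ≤ m) (hm1 : m ≤ 1) (t : ℤ) (k' : Fin J) :
    densityFactor b t k' ≤ J * m := by
  have hm0 : 0 ≤ m := (hb0 t k').trans (hbm t k')
  have hsq : ∀ t k, b t k ^ 2 ≤ m := fun t k =>
    (pow_le_pow_left₀ (hb0 t k) (hbm t k) 2).trans (by nlinarith)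
  have hsum := sum_le_card_nsmul (univ.erase k')
    (fun i' => b (t + ((k' : ℕ) : ℤ) - ((i' : ℕ) : ℤ)) i' ^ 2) m fun i' _ => hsq _ i'
  have hcard : (((univ.erase k').card : ℕ) : ℝ) + 1 = J := by
    exact_mod_cast (card_erase_add_one (mem_univ k')).trans (card_fin J)
  rw [nsmul_eq_mul] at hsum
  rw [densityFactor, ← hcard]
  linarith [hbm t k']

lemma prod_densityFactor_le {b : ℤ → Fin J → ℝ} {m : ℝ} (hb0 : ∀ t k, 0 ≤ b t k)
    (hbm : ∀ t k, b t k ≤ m) (hm1 : m ≤ 1) (t : ℤ) (k : Fin J) :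
    ∏ k' ∈ univ.erase k, densityFactor b t k' ≤ (J * m) ^ (J - 1) := by
  have hfactor0 : ∀ k', 0 ≤ densityFactor b t k' := fun k' =>
    add_nonneg (hb0 t k') (sum_nonneg fun _ _ => sq_nonneg _)
  calc ∏ k' ∈ univ.erase k, densityFactor b t k'
      ≤ ∏ _k' ∈ univ.erase k, (J * m : ℝ) :=
        prod_le_prod (fun k' _ => hfactor0 k') fun k' _ => densityFactor_le hb0 hbm hm1 t k'
    _ = (J * m) ^ (J - 1) := by
      rw [prod_const, card_erase_of_mem (mem_univ k), card_univ, Fintype.card_fin]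

lemma iSup_le_of_le_mul_prod_densityFactor {A : ℝ} (hA : 0 ≤ A) {b b' : ℤ → Fin J → ℝ}
    (hb0 : ∀ t k, 0 ≤ b t k) (hb1 : ∀ t k, b t k ≤ 1)
    (hb' : ∀ t k, b' t k ≤ A * ∏ k' ∈ univ.erase k, densityFactor b t k') :
    ⨆ (t) (k), b' t k ≤ A * (J * ⨆ (t) (k), b t k) ^ (J - 1) := by
  have hmax1 : ⨆ (t) (k), b t k ≤ 1 :=
    Real.iSup_le (fun t => Real.iSup_le (hb1 t) zero_le_one) zero_le_one
  have hbound := fun t k =>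
    (hb' t k).trans (mul_le_mul_of_nonneg_left
      (prod_densityFactor_le hb0 (le_ciSup₂_of_forall_le hb1) hmax1 t k) hA)
  have hrhs0 : 0 ≤ A * (J * ⨆ (t) (k), b t k) ^ (J - 1) :=
    mul_nonneg hA (pow_nonneg (mul_nonneg (Nat.cast_nonneg J)
      (Real.iSup_nonneg fun t => Real.iSup_nonneg (hb0 t))) _)
  exact Real.iSup_le (fun t => Real.iSup_le (hbound t) hrhs0) hrhs0

end DensityEvolution

theorem stmt11_general (J : ℕ) (hJ : 3 ≤ J) (A : ℝ) (hA0 : 0 < A) (hA1 : A ≤ 1)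
    (B : ℕ → ℤ → Fin J → ℝ)
    (hB0 : ∀ (ℓ : ℕ) (t : ℤ) (k : Fin J), 0 ≤ B ℓ t k)
    (hB1 : ∀ (ℓ : ℕ) (t : ℤ) (k : Fin J), B ℓ t k ≤ 1)
    (hupd : ∀ (ℓ : ℕ), 1 ≤ ℓ → ∀ (t : ℤ) (k : Fin J),
      B ℓ t k ≤ A * ∏ k' ∈ Finset.univ.erase k,
        (B (ℓ - 1) t k' + ∑ i' ∈ Finset.univ.erase k',
          (B (ℓ - 1) (t + ((k' : ℕ) : ℤ) - ((i' : ℕ) : ℤ)) i') ^ 2))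
    (Bmax : ℕ → ℝ)
    (hBmax : ∀ ℓ, Bmax ℓ = ⨆ (t : ℤ) (k : Fin J), B ℓ t k)
    (Bbr : ℝ)
    (hBbr : Bbr = A ^ (-(1 : ℝ) / ((J : ℝ) - 1)) *
      (2 * (J : ℝ) - 1) ^ (-((J : ℝ) - 1) / ((J : ℝ) - 2)))
    (ℓ' : ℕ) :
    ∀ ℓ₀, ℓ' ≤ ℓ₀ → ∀ (t : ℤ) (k : Fin J),
      B ℓ₀ t k ≤ Bmax ℓ₀ ∧
      Bmax ℓ₀ ≤ Bbr * (Bmax ℓ' / Bbr) ^ ((J - 1) ^ (ℓ₀ - ℓ')) := by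
  have hJR : (3 : ℝ) ≤ J := by exact_mod_cast hJ
  have hC : (0 : ℝ) < 2 * J - 1 := by linarith
  have hBbr' : Bbr = breakout A (2 * J - 1) J := hBbr
  have hmax0 : ∀ ℓ, 0 ≤ Bmax ℓ := fun ℓ =>
    hBmax ℓ ▸ Real.iSup_nonneg fun t => Real.iSup_nonneg (hB0 ℓ t)
  have hstep : ∀ ℓ, Bmax (ℓ + 1) ≤ A * ((2 * J - 1) * Bmax ℓ) ^ (J - 1) := fun ℓ =>
    calc Bmax (ℓ + 1) ≤ A * (J * Bmax ℓ) ^ (J - 1) := by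
          rw [hBmax, hBmax]
          exact iSup_le_of_le_mul_prod_densityFactor hA0.le (hB0 ℓ) (hB1 ℓ)
            (hupd (ℓ + 1) le_add_self)
      _ ≤ A * ((2 * J - 1) * Bmax ℓ) ^ (J - 1) := by
          have := hmax0 ℓ
          gcongr
          linarith
  intro ℓ₀ hℓ₀ t k
  refine ⟨hBmax ℓ₀ ▸ le_ciSup₂_of_forall_le (hB1 ℓ₀) t k, ?_⟩
  refine le_mul_div_pow_pow_of_le_mul_mul_pow hmax0 hA0.le hC.le ?_ ?_ hstep ℓ₀ hℓ₀
  · rw [hBbr']; unfold breakout; positivity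
  · rw [hBbr']; exact mul_mul_breakout_pow_le hJ hA0 hA1 hC

/-- Double-exponential convergence of density evolution for terminated `(J, 2J)`-regular
LDPC convolutional codes: let `B ℓ t k ∈ [0,1]` be the Bhattacharyya parameter of the
message sent in iteration `ℓ` from a symbol node at time `t` to a check node at time
`t + k`, satisfying the density-evolution bound
`B ℓ t k ≤ A ∏_{k' ≠ k} (B (ℓ-1) t k' + ∑_{i' ≠ k'} B (ℓ-1) (t+k'-i') i' ^ 2)` for
`ℓ ≥ 1`, where `0 < A ≤ 1` is the channel Bhattacharyya parameter. Let
`Bmax ℓ = sup_{t,k} B ℓ t k` and let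
`B_br = A^(-1/(J-1)) (2J-1)^(-(J-1)/(J-2))` be the breakout value. If `Bmax ℓ' < B_br`
for some iteration `ℓ'`, then for all `ℓ₀ ≥ ℓ'` and all `t, k`,
`B ℓ₀ t k ≤ Bmax ℓ₀ ≤ B_br (Bmax ℓ' / B_br)^((J-1)^(ℓ₀-ℓ'))`. -/
theorem stmt11 (J : ℕ) (hJ : 3 ≤ J) (A : ℝ) (hA0 : 0 < A) (hA1 : A ≤ 1)
    (B : ℕ → ℤ → Fin J → ℝ)
    (hB0 : ∀ (ℓ : ℕ) (t : ℤ) (k : Fin J), 0 ≤ B ℓ t k)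
    (hB1 : ∀ (ℓ : ℕ) (t : ℤ) (k : Fin J), B ℓ t k ≤ 1)
    (hupd : ∀ (ℓ : ℕ), 1 ≤ ℓ → ∀ (t : ℤ) (k : Fin J),
      B ℓ t k ≤ A * ∏ k' ∈ Finset.univ.erase k,
        (B (ℓ - 1) t k' + ∑ i' ∈ Finset.univ.erase k',
          (B (ℓ - 1) (t + ((k' : ℕ) : ℤ) - ((i' : ℕ) : ℤ)) i') ^ 2))
    (Bmax : ℕ → ℝ)
    (hBmax : ∀ ℓ, Bmax ℓ = ⨆ (t : ℤ) (k : Fin J), B ℓ t k)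
    (Bbr : ℝ)
    (hBbr : Bbr = A ^ (-(1 : ℝ) / ((J : ℝ) - 1)) *
      (2 * (J : ℝ) - 1) ^ (-((J : ℝ) - 1) / ((J : ℝ) - 2)))
    (ℓ' : ℕ) (hinit : Bmax ℓ' < Bbr) :
    ∀ ℓ₀, ℓ' ≤ ℓ₀ → ∀ (t : ℤ) (k : Fin J),
      B ℓ₀ t k ≤ Bmax ℓ₀ ∧
      Bmax ℓ₀ ≤ Bbr * (Bmax ℓ' / Bbr) ^ ((J - 1) ^ (ℓ₀ - ℓ')) :=
  stmt11_general J hJ A hA0 hA1 B hB0 hB1 hupd Bmax hBmax Bbr hBbr ℓ'
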